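/- arXiv:1302.2347 — 3 statements merged into one kernel-verified Lean document; each statement's English description precedes it below -/
import Mathlib

section
/- For each n, let ε_0, ε_1, …, ε_n be independent random signs, each equal to +1 or −1 with probability 1/2, let Q_n(x) = Σ_{m=0}^n C(n,m) ε_m sin(mx), let M̃_n = sup_{0 ≤ x ≤ 2π} |Q_n(x)|, and let R_n = Σ_{m=0}^n C(n,m)². Then the probability of the event M̃_n ≤ 2·√(R_n · ln n) tends to 1 as n → ∞. -/
/-!
At a fixed point `x`, `Q_n(x) = ∑ₘ C(n,m) sin(mx) εₘ` is a sum of independent centred variables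
bounded by `C(n,m)`, so Hoeffding's inequality gives
`P(|Q_n(x)| ≥ (15/8) √(R_n log n)) ≤ 2 n^(-225/128)`.
`Q_n` is `n 2ⁿ`-Lipschitz, and `4ⁿ ≤ (n+1) R_n` by Cauchy–Schwarz, so the values of `Q_n` on a grid
of `O(n^(3/2))` points of `[0, 2π]` determine `M̃_n` up to `√(R_n log n) / 8`. A union bound over
the grid leaves a failure probability `O(n^(3/2 - 225/128)) → 0`.
-/


open MeasureTheory Finset Filter Real

/-- The uniform probability measure on sign vectors, encoded as `Fin (n+1) → Bool`. -/
noncomputable def signs (n : ℕ) : Measure (Fin (n+1) → Bool) :=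
  (PMF.uniformOfFintype (Fin (n+1) → Bool)).toMeasure

/-- The `m`-th random sign: `+1` or `-1`, each with probability `1/2`,
independent across coordinates under `signs n`. -/
noncomputable def eps {n : ℕ} (ω : Fin (n+1) → Bool) (m : Fin (n+1)) : ℝ :=
  if ω m then 1 else -1

/-- The random trigonometric polynomial `Q_n(x) = ∑_{m=0}^n C(n,m) ε_m sin (m x)`. -/
noncomputable def Q (n : ℕ) (ω : Fin (n+1) → Bool) (x : ℝ) : ℝ :=
  ∑ m : Fin (n+1), (n.choose m : ℝ) * eps ω m * Real.sin (m * x)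

/-- `M̃_n = sup_{0 ≤ x ≤ 2π} |Q_n(x)|`. -/
noncomputable def Mtilde (n : ℕ) (ω : Fin (n+1) → Bool) : ℝ :=
  ⨆ x : Set.Icc (0:ℝ) (2*π), |Q n ω x|

/-- `R_n = ∑_{m=0}^n C(n,m)²`. -/
noncomputable def R (n : ℕ) : ℝ :=
  ∑ m ∈ range (n+1), (n.choose m : ℝ)^2

open ProbabilityTheory

section Hoeffding

variable {Ω ι : Type*} [MeasurableSpace Ω] {μ : Measure Ω} [IsProbabilityMeasure μ]
  {X : ι → Ω → ℝ} {b : ι → ℝ}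

lemma measureReal_sum_ge_le_of_abs_le (h_indep : iIndepFun X μ)
    (h_meas : ∀ i, AEMeasurable (X i) μ) (h_bdd : ∀ i ω, |X i ω| ≤ b i) (h_mean : ∀ i, μ[X i] = 0)
    (s : Finset ι) {t : ℝ} (ht : 0 ≤ t) :
    μ.real {ω | t ≤ ∑ i ∈ s, X i ω} ≤ exp (-t ^ 2 / (2 * ∑ i ∈ s, b i ^ 2)) := by
  have h_subG i : HasSubgaussianMGF (X i) ((‖b i - -b i‖₊ / 2) ^ 2) μ :=
    hasSubgaussianMGF_of_mem_Icc_of_integral_eq_zero (h_meas i)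
      (ae_of_all _ fun ω => abs_le.mp (h_bdd i ω)) (h_mean i)
  convert HasSubgaussianMGF.measure_sum_ge_le_of_iIndepFun h_indep (fun i _ => h_subG i) ht
    using 4
  push_cast
  refine Finset.sum_congr rfl fun i _ => ?_
  rw [Real.norm_eq_abs, sub_neg_eq_add, ← two_mul, abs_mul, abs_two,
    mul_div_cancel_left₀ _ two_ne_zero, sq_abs]

lemma measureReal_abs_sum_ge_le_of_abs_le (h_indep : iIndepFun X μ)
    (h_meas : ∀ i, AEMeasurable (X i) μ) (h_bdd : ∀ i ω, |X i ω| ≤ b i) (h_mean : ∀ i, μ[X i] = 0)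
    (s : Finset ι) {t : ℝ} (ht : 0 ≤ t) :
    μ.real {ω | t ≤ |∑ i ∈ s, X i ω|} ≤ 2 * exp (-t ^ 2 / (2 * ∑ i ∈ s, b i ^ 2)) := by
  have h_neg : μ.real {ω | t ≤ ∑ i ∈ s, -X i ω} ≤ exp (-t ^ 2 / (2 * ∑ i ∈ s, b i ^ 2)) :=
    measureReal_sum_ge_le_of_abs_le (X := fun i ω => -X i ω)
      (h_indep.comp (fun _ => Neg.neg) fun _ => measurable_neg) (fun i => (h_meas i).neg)
      (fun i ω => (abs_neg (X i ω)).trans_le (h_bdd i ω))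
      (fun i => by rw [integral_neg, h_mean i, neg_zero]) s ht
  calc μ.real {ω | t ≤ |∑ i ∈ s, X i ω|}
      ≤ μ.real ({ω | t ≤ ∑ i ∈ s, X i ω} ∪ {ω | t ≤ ∑ i ∈ s, -X i ω}) := by
        refine measureReal_mono (fun ω hω => ?_)
        simpa only [Set.mem_union, Set.mem_ofPred_eq, Finset.sum_neg_distrib] using le_abs.mp hω
    _ ≤ _ := (measureReal_union_le _ _).trans (by
        linarith [measureReal_sum_ge_le_of_abs_le h_indep h_meas h_bdd h_mean s ht])

end Hoeffding

lemma signs_eq_pi (n : ℕ) : signs n = Measure.pi fun _ => uniformOn (Set.univ : Set Bool) := by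
  classical
  rw [← uniformOn_pi, Set.pi_univ]
  ext s -
  rw [signs, PMF.toMeasure_uniformOfFintype_apply s (Set.toFinite s).measurableSet, uniformOn_univ,
    Measure.count_apply_finite' (Set.toFinite s) (Set.toFinite s).measurableSet,
    Set.Finite.card_toFinset]

instance isProbabilityMeasure_signs (n : ℕ) : IsProbabilityMeasure (signs n) := by
  rw [signs]; infer_instance

lemma iIndepFun_eps (n : ℕ) : iIndepFun (fun m (ω : Fin (n+1) → Bool) => eps ω m) (signs n) := by
  rw [signs_eq_pi]
  exact iIndepFun_pi (X := fun _ (b : Bool) => if b then (1:ℝ) else -1) fun _ => by fun_prop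

lemma integral_eps (n : ℕ) (m : Fin (n+1)) : ∫ ω, eps ω m ∂signs n = 0 := by
  rw [signs_eq_pi]
  refine (integral_comp_eval (X := fun _ : Fin (n+1) => Bool) (i := m)
    (f := fun b : Bool => if b then (1:ℝ) else -1) (by fun_prop)).trans ?_
  rw [integral_fintype .of_finite]
  simp only [Fintype.sum_bool, measureReal_def, uniformOn_univ]
  simp

lemma abs_eps {n : ℕ} (ω : Fin (n+1) → Bool) (m : Fin (n+1)) : |eps ω m| = 1 := by
  unfold eps; split_ifs <;> norm_num

lemma sum_choose_eq_two_pow (n : ℕ) : ∑ m : Fin (n+1), (n.choose m : ℝ) = 2 ^ n := by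
  rw [Fin.sum_univ_eq_sum_range (fun m => (n.choose m : ℝ)) (n+1)]
  exact_mod_cast Nat.sum_range_choose n

lemma sum_choose_sq_eq_R (n : ℕ) : ∑ m : Fin (n+1), (n.choose m : ℝ) ^ 2 = R n :=
  Fin.sum_univ_eq_sum_range (fun m => (n.choose m : ℝ) ^ 2) (n+1)

lemma R_nonneg (n : ℕ) : 0 ≤ R n := Finset.sum_nonneg fun _ _ => sq_nonneg _

lemma two_pow_sq_le_succ_mul_R (n : ℕ) : ((2 : ℝ) ^ n) ^ 2 ≤ (n + 1) * R n := by
  have h := sq_sum_le_card_mul_sum_sq (s := range (n+1)) (f := fun m => (n.choose m : ℝ))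
  rw [card_range, Nat.cast_succ] at h
  rwa [← Fin.sum_univ_eq_sum_range (fun m => (n.choose m : ℝ)), sum_choose_eq_two_pow] at h

lemma R_pos (n : ℕ) : 0 < R n :=
  pos_of_mul_pos_right ((two_pow_sq_le_succ_mul_R n).trans_lt' (by positivity)) (by positivity)

lemma two_pow_le_mul_sqrt_R (n : ℕ) : (2 : ℝ) ^ n ≤ (n.sqrt + 1) * √(R n) := by
  rw [← Real.sqrt_sq (by positivity : (0 : ℝ) ≤ n.sqrt + 1), ← Real.sqrt_mul (by positivity),
    Real.le_sqrt (by positivity) (mul_nonneg (sq_nonneg _) (R_nonneg n))]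
  have h_sqrt : (n : ℝ) + 1 ≤ (n.sqrt + 1) ^ 2 := by exact_mod_cast Nat.lt_succ_sqrt' n
  calc ((2 : ℝ) ^ n) ^ 2 ≤ (n + 1) * R n := two_pow_sq_le_succ_mul_R n
    _ ≤ (n.sqrt + 1) ^ 2 * R n := mul_le_mul_of_nonneg_right h_sqrt (R_nonneg n)

lemma measureReal_abs_Q_ge_le (n : ℕ) (x : ℝ) {t : ℝ} (ht : 0 ≤ t) :
    (signs n).real {ω | t ≤ |Q n ω x|} ≤ 2 * exp (-t ^ 2 / (2 * R n)) := by
  set c : Fin (n+1) → ℝ := fun m => n.choose m * Real.sin (m * x)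
  have hQ ω : Q n ω x = ∑ m, c m * eps ω m := Finset.sum_congr rfl fun m _ => by ring
  simp_rw [hQ, ← sum_choose_sq_eq_R]
  refine measureReal_abs_sum_ge_le_of_abs_le (X := fun m ω => c m * eps ω m)
    ((iIndepFun_eps n).comp (fun m y => c m * y) fun _ => by fun_prop) (fun _ => .of_discrete)
    (fun m ω => ?_) (fun m => by rw [integral_const_mul, integral_eps, mul_zero]) _ ht
  rw [abs_mul, abs_eps, mul_one, abs_mul, Nat.abs_cast]
  exact mul_le_of_le_one_right (Nat.cast_nonneg _) (abs_sin_le_one _)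

lemma abs_Q_sub_Q_le (n : ℕ) (ω : Fin (n+1) → Bool) (x y : ℝ) :
    |Q n ω x - Q n ω y| ≤ n * 2 ^ n * |x - y| := by
  calc |Q n ω x - Q n ω y|
      = |∑ m : Fin (n+1), n.choose m * eps ω m * (Real.sin (m * x) - Real.sin (m * y))| := by
        simp only [Q, ← Finset.sum_sub_distrib, mul_sub]
    _ ≤ ∑ m : Fin (n+1), n.choose m * (n * |x - y|) := by
        refine (Finset.abs_sum_le_sum_abs _ _).trans (Finset.sum_le_sum fun m _ => ?_)
        rw [abs_mul, abs_mul, abs_eps, mul_one, Nat.abs_cast]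
        refine mul_le_mul_of_nonneg_left ?_ (Nat.cast_nonneg _)
        calc |Real.sin (m * x) - Real.sin (m * y)| ≤ |m * x - m * y| := abs_sin_sub_sin_le _ _
          _ = m * |x - y| := by rw [← mul_sub, abs_mul, Nat.abs_cast]
          _ ≤ n * |x - y| := by gcongr; exact_mod_cast m.is_le
    _ = n * 2 ^ n * |x - y| := by rw [← Finset.sum_mul, sum_choose_eq_two_pow]; ring

lemma exists_grid_point_near {T x : ℝ} (hT : 0 < T) (hx : x ∈ Set.Icc 0 T) {N : ℕ} (hN : 0 < N) :
    ∃ j ≤ N, |x - T * j / N| ≤ T / N := by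
  have hN' : (0 : ℝ) < N := by exact_mod_cast hN
  set u := x * N / T
  have hu : 0 ≤ u := by have := hx.1; positivity
  refine ⟨⌊u⌋₊, Nat.floor_le_of_le ?_, ?_⟩
  · rw [div_le_iff₀ hT]; nlinarith [hx.2]
  · have hTu : T * u = x * N := by simp only [u]; field_simp
    have h_eq : x - T * ⌊u⌋₊ / N = T / N * (u - ⌊u⌋₊) := by
      rw [mul_sub, div_mul_eq_mul_div, hTu]; field_simp
    rw [h_eq, abs_mul, abs_of_pos (by positivity)]
    refine mul_le_of_le_one_right (by positivity) (abs_le.mpr ⟨?_, ?_⟩)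
    · linarith [Nat.floor_le hu]
    · linarith [Nat.lt_floor_add_one u]

lemma abs_le_of_abs_le_on_grid {f : ℝ → ℝ} {L T B x : ℝ} {N : ℕ}
    (hf : ∀ x y, |f x - f y| ≤ L * |x - y|) (hL : 0 ≤ L) (hT : 0 < T) (hN : 0 < N)
    (hgrid : ∀ j ≤ N, |f (T * j / N)| ≤ B) (hx : x ∈ Set.Icc 0 T) :
    |f x| ≤ B + L * (T / N) := by
  obtain ⟨j, hj, hxj⟩ := exists_grid_point_near hT hx hN
  calc |f x| ≤ |f (T * j / N)| + |f x - f (T * j / N)| := by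
        linarith [abs_sub_abs_le_abs_sub (f x) (f (T * j / N))]
    _ ≤ B + L * (T / N) := add_le_add (hgrid j hj) ((hf _ _).trans (by gcongr))

lemma Mtilde_le_of_abs_Q_le_on_grid (n : ℕ) (ω : Fin (n+1) → Bool) {N : ℕ} (hN : 0 < N) {B : ℝ}
    (hgrid : ∀ j ≤ N, |Q n ω (2 * π * j / N)| ≤ B) :
    Mtilde n ω ≤ B + n * 2 ^ n * (2 * π / N) := by
  have : Nonempty (Set.Icc 0 (2 * π)) := ⟨⟨0, le_rfl, by positivity⟩⟩
  exact ciSup_le fun x => abs_le_of_abs_le_on_grid (abs_Q_sub_Q_le n ω) (by positivity)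
    (by positivity) hN hgrid x.2

lemma one_le_log_of_three_le {n : ℕ} (hn : 3 ≤ n) : 1 ≤ Real.log n := by
  rw [Real.le_log_iff_exp_le (by positivity)]
  have : (3 : ℝ) ≤ n := by exact_mod_cast hn
  linarith [Real.exp_one_lt_d9]

/-- Large enough for `lipschitz_error_le` (by `two_pow_le_mul_sqrt_R`), yet `O(n^(3/2))`. -/
def gridSize (n : ℕ) : ℕ := 64 * n * (n.sqrt + 1)

lemma lipschitz_error_le {n : ℕ} (hn : 3 ≤ n) :
    n * 2 ^ n * (2 * π / gridSize n) ≤ √(R n * Real.log n) / 8 := by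
  have h_sqrtR : √(R n) ≤ √(R n * Real.log n) :=
    Real.sqrt_le_sqrt (le_mul_of_one_le_right (R_nonneg n) (one_le_log_of_three_le hn))
  have h_eq : n * 2 ^ n * (2 * π / gridSize n) = π * 2 ^ n / (32 * (n.sqrt + 1)) := by
    simp only [gridSize]; push_cast; field_simp; ring
  rw [h_eq, div_le_div_iff₀ (by positivity) (by positivity)]
  calc π * 2 ^ n * 8 ≤ 4 * ((n.sqrt + 1) * √(R n)) * 8 := by
        gcongr
        exacts [Real.pi_le_four, two_pow_le_mul_sqrt_R n]
    _ ≤ √(R n * Real.log n) * (32 * (n.sqrt + 1)) := by nlinarith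

lemma measureReal_Mtilde_gt_le {n : ℕ} (hn : 3 ≤ n) :
    (signs n).real {ω | Mtilde n ω ≤ 2 * √(R n * Real.log n)}ᶜ
      ≤ (gridSize n + 1) * (2 * (n : ℝ) ^ (-(225 / 128 : ℝ))) := by
  set N := gridSize n
  set t := 15 / 8 * √(R n * Real.log n) with ht
  have hN : 0 < N := by simp only [N, gridSize]; positivity
  have h_log := one_le_log_of_three_le hn
  have h_cover : {ω | Mtilde n ω ≤ 2 * √(R n * Real.log n)}ᶜ
      ⊆ ⋃ j ∈ range (N + 1), {ω | t ≤ |Q n ω (2 * π * j / N)|} := by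
    intro ω hω
    by_contra h
    simp only [Set.mem_iUnion, Set.mem_ofPred_eq, mem_range, not_exists, not_le] at h
    refine hω (le_trans (Mtilde_le_of_abs_Q_le_on_grid n ω hN fun j hj => (h j (by omega)).le) ?_)
    linarith [lipschitz_error_le hn]
  have h_tail : exp (-t ^ 2 / (2 * R n)) = (n : ℝ) ^ (-(225 / 128 : ℝ)) := by
    rw [Real.rpow_def_of_pos (by positivity), mul_pow, Real.sq_sqrt (by nlinarith [R_pos n])]
    congr 1
    field_simp [(R_pos n).ne']
    ring
  calc (signs n).real {ω | Mtilde n ω ≤ 2 * √(R n * Real.log n)}ᶜ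
      ≤ (signs n).real (⋃ j ∈ range (N + 1), {ω | t ≤ |Q n ω (2 * π * j / N)|}) :=
        measureReal_mono h_cover (measure_ne_top _ _)
    _ ≤ ∑ j ∈ range (N + 1), (signs n).real {ω | t ≤ |Q n ω (2 * π * j / N)|} :=
        measureReal_biUnion_finset_le _ _
    _ ≤ ∑ j ∈ range (N + 1), 2 * exp (-t ^ 2 / (2 * R n)) :=
        sum_le_sum fun j _ => measureReal_abs_Q_ge_le n _ (by positivity)
    _ = (N + 1) * (2 * (n : ℝ) ^ (-(225 / 128 : ℝ))) := by
        rw [sum_const, card_range, nsmul_eq_mul, h_tail]; push_cast; ring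

lemma tendsto_failure_bound :
    Tendsto (fun n : ℕ => (gridSize n + 1 : ℝ) * (2 * (n : ℝ) ^ (-(225 / 128 : ℝ))))
      atTop (nhds 0) := by
  have h_lim : Tendsto (fun n : ℕ => 258 * (n : ℝ) ^ (-(33 / 128 : ℝ))) atTop (nhds 0) := by
    simpa using ((tendsto_rpow_neg_atTop (by norm_num : (0 : ℝ) < 33 / 128)).comp
      tendsto_natCast_atTop_atTop).const_mul 258
  refine squeeze_zero' (.of_forall fun n => by positivity) ?_ h_lim
  filter_upwards [eventually_ge_atTop 1] with n hn
  have hn' : (1 : ℝ) ≤ n := by exact_mod_cast hn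
  have h_sqrt : (n.sqrt : ℝ) ≤ √n := Real.nat_sqrt_le_real_sqrt
  have h_one : 1 ≤ √(n : ℝ) := Real.one_le_sqrt.mpr hn'
  have h_grid : (gridSize n + 1 : ℝ) ≤ 129 * (n * √n) := by
    simp only [gridSize]; push_cast; nlinarith
  have h_pow : (n : ℝ) * √n * (n : ℝ) ^ (-(225 / 128 : ℝ)) = (n : ℝ) ^ (-(33 / 128 : ℝ)) := by
    rw [Real.sqrt_eq_rpow, ← Real.rpow_one_add' (by positivity) (by norm_num),
      ← Real.rpow_add (by positivity)]
    norm_num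
  calc (gridSize n + 1 : ℝ) * (2 * (n : ℝ) ^ (-(225 / 128 : ℝ)))
      ≤ 129 * (n * √n) * (2 * (n : ℝ) ^ (-(225 / 128 : ℝ))) := by gcongr
    _ = 258 * (n : ℝ) ^ (-(33 / 128 : ℝ)) := by rw [← h_pow]; ring

theorem stmt2 :
    Tendsto
      (fun n : ℕ =>
        signs n {ω | Mtilde n ω ≤ 2 * Real.sqrt (R n * Real.log n)})
      atTop (nhds 1) := by
  have h_bad : Tendsto
      (fun n => (signs n).real {ω | Mtilde n ω ≤ 2 * √(R n * Real.log n)}ᶜ) atTop (nhds 0) :=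
    squeeze_zero' (.of_forall fun _ => measureReal_nonneg)
      ((eventually_ge_atTop 3).mono fun _ => measureReal_Mtilde_gt_le) tendsto_failure_bound
  simp_rw [probReal_compl_eq_one_sub .of_discrete] at h_bad
  have h_good := (tendsto_const_nhds (x := (1 : ℝ))).sub h_bad
  simp_rw [sub_sub_cancel, sub_zero] at h_good
  simpa [ofReal_measureReal] using ENNReal.tendsto_ofReal h_good
end

section
/- Let g(x,y) be a bounded measurable real-valued function on [a,b] × [c,d] with a < b and c < d. Suppose |g(x,y)| ≤ A for all (x,y), where A > 0, that (∫_c^d ∫_a^b g²(x,y) dx dy) / ((b−a)(d−c)) = B, and additionally that ∫_c^d ∫_a^b g(x,y) dx dy = 0. Then for any positive real number μ, (∫_c^d ∫_a^b e^{μ g(x,y)} dx dy) / ((b−a)(d−c)) ≤ 1 + (B/A²) e^{μA}. -/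
/-!
Expanding `e^s - 1 - s = ∑ sⁿ⁺²/(n+2)!` and comparing term by term gives
`r² (e^s - 1 - s) ≤ s² (e^r - 1 - r)` whenever `|s| ≤ r`. With `s = μ g` and `r = μ A` this
yields the pointwise bound `e^{μg} ≤ 1 + μg + (g/A)² e^{μA}`. Integrating it over the
rectangle, the linear term vanishes because `g` has mean zero, and the quadratic one becomes
`B e^{μA} / A²`.
-/

open MeasureTheory Real Set Nat

theorem hasSum_exp_sub_one_sub (x : ℝ) :
    HasSum (fun n : ℕ => x ^ (n + 2) / (n + 2)!) (exp x - 1 - x) := by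
  have h := (hasSum_nat_add_iff' 2).2 (exp_eq_exp_ℝ ▸ NormedSpace.expSeries_div_hasSum_exp x)
  simpa [Finset.sum_range_succ, sub_sub] using h

theorem sq_mul_exp_sub_one_sub_le {x r : ℝ} (hx : |x| ≤ r) :
    r ^ 2 * (exp x - 1 - x) ≤ x ^ 2 * (exp r - 1 - r) := by
  refine hasSum_le (fun n => ?_) ((hasSum_exp_sub_one_sub x).mul_left _)
    ((hasSum_exp_sub_one_sub r).mul_left _)
  rw [mul_div_assoc', mul_div_assoc']
  refine div_le_div_of_nonneg_right ?_ (by positivity)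
  have hpow : x ^ n ≤ |x| ^ n := (le_abs_self _).trans_eq (abs_pow x n)
  calc r ^ 2 * x ^ (n + 2) = r ^ 2 * (x ^ 2 * x ^ n) := by ring
    _ ≤ r ^ 2 * (x ^ 2 * r ^ n) := by
        gcongr r ^ 2 * (x ^ 2 * ?_)
        exact hpow.trans (by gcongr)
    _ = x ^ 2 * r ^ (n + 2) := by ring

theorem exp_mul_le_of_abs_le {t A μ : ℝ} (hA : 0 < A) (hμ : 0 ≤ μ) (ht : |t| ≤ A) :
    exp (μ * t) ≤ 1 + μ * t + exp (μ * A) / A ^ 2 * t ^ 2 := by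
  rcases hμ.eq_or_lt with rfl | hμ
  · simp only [zero_mul, exp_zero, add_zero, le_add_iff_nonneg_right]
    positivity
  have key := sq_mul_exp_sub_one_sub_le (x := μ * t) (r := μ * A)
    (by rw [abs_mul, abs_of_pos hμ]; gcongr)
  rw [mul_pow, mul_pow, mul_assoc, mul_assoc] at key
  have hquad : A ^ 2 * (exp (μ * t) - 1 - μ * t) ≤ t ^ 2 * exp (μ * A) := by
    have : 0 ≤ μ * A := by positivity
    refine (le_of_mul_le_mul_left key (by positivity)).trans ?_
    gcongr
    linarith
  rw [← sub_le_iff_le_add', ← sub_sub, div_mul_eq_mul_div, le_div_iff₀ (by positivity)]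
  linarith

section FiniteMeasure

variable {Ω : Type*} [MeasurableSpace Ω] {ν : Measure Ω} [IsFiniteMeasure ν]
  {G : Ω → ℝ} {A : ℝ}

theorem integrable_comp_of_ae_abs_le (hG : AEStronglyMeasurable G ν)
    (hbound : ∀ᵐ ω ∂ν, |G ω| ≤ A) {f : ℝ → ℝ} (hf : Continuous f) :
    Integrable (fun ω => f (G ω)) ν := by
  obtain ⟨C, hC⟩ :=
    isCompact_Icc.exists_bound_of_continuousOn (hf.continuousOn (s := Icc (-A) A))
  refine .of_bound (hf.comp_aestronglyMeasurable hG) C ?_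
  filter_upwards [hbound] with ω hω using hC _ (abs_le.1 hω)

theorem integral_exp_mul_le_of_integral_eq_zero (hG : AEStronglyMeasurable G ν) {μ : ℝ}
    (hA : 0 < A) (hμ : 0 ≤ μ) (hbound : ∀ᵐ ω ∂ν, |G ω| ≤ A)
    (hmean : ∫ ω, G ω ∂ν = 0) :
    ∫ ω, exp (μ * G ω) ∂ν ≤
      ν.real univ + exp (μ * A) / A ^ 2 * ∫ ω, G ω ^ 2 ∂ν := by
  have hint {f : ℝ → ℝ} (hf : Continuous f) := integrable_comp_of_ae_abs_le hG hbound hf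
  have hid := hint (f := fun t => t) continuous_id
  have hexp := hint (f := fun t => exp (μ * t)) (by fun_prop)
  have hlin := hint (f := fun t => 1 + μ * t) (by fun_prop)
  have hsq := hint (f := fun t => t ^ 2) (by fun_prop)
  calc ∫ ω, exp (μ * G ω) ∂ν
      ≤ ∫ ω, (1 + μ * G ω) + exp (μ * A) / A ^ 2 * G ω ^ 2 ∂ν := by
        refine integral_mono_ae hexp (hlin.add (hsq.const_mul _)) ?_
        filter_upwards [hbound] with ω hω using exp_mul_le_of_abs_le hA hμ hω
    _ = ν.real univ + exp (μ * A) / A ^ 2 * ∫ ω, G ω ^ 2 ∂ν := by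
        rw [integral_add hlin (hsq.const_mul _), integral_add (integrable_const 1)
          (hid.const_mul μ), integral_const_mul, integral_const_mul, integral_const, hmean,
          smul_eq_mul, mul_one, mul_zero, add_zero]

end FiniteMeasure

theorem intervalIntegral_intervalIntegral_eq_setIntegral_prod {E : Type*} [NormedAddCommGroup E]
    [NormedSpace ℝ E] {f : ℝ → ℝ → E} {a b c d : ℝ} (hab : a ≤ b) (hcd : c ≤ d)
    (hf : IntegrableOn (fun p : ℝ × ℝ => f p.2 p.1) (Ioc c d ×ˢ Ioc a b)) :
    ∫ y in c..d, ∫ x in a..b, f x y = ∫ p in Ioc c d ×ˢ Ioc a b, f p.2 p.1 := by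
  rw [Measure.volume_eq_prod] at hf ⊢
  simp only [intervalIntegral.integral_of_le hab, intervalIntegral.integral_of_le hcd]
  exact (setIntegral_prod _ hf).symm

theorem volume_real_Ioc_prod_Ioc {a b c d : ℝ} (hab : a ≤ b) (hcd : c ≤ d) :
    volume.real (Ioc c d ×ˢ Ioc a b) = (b - a) * (d - c) := by
  rw [Measure.volume_eq_prod, measureReal_prod_prod]
  simp [hab, hcd, mul_comm]

theorem stmt8 (a b c d A B : ℝ) (hab : a < b) (hcd : c < d)
    (g : ℝ → ℝ → ℝ) (hmeas : Measurable (Function.uncurry g))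
    (hA : 0 < A)
    (hbound : ∀ x ∈ Set.Icc a b, ∀ y ∈ Set.Icc c d, |g x y| ≤ A)
    (hB : (∫ y in c..d, ∫ x in a..b, (g x y)^2) / ((b - a) * (d - c)) = B)
    (hzero : (∫ y in c..d, ∫ x in a..b, g x y) = 0)
    (μ : ℝ) (hμ : 0 < μ) :
    (∫ y in c..d, ∫ x in a..b, Real.exp (μ * g x y)) / ((b - a) * (d - c))
      ≤ 1 + B / A^2 * Real.exp (μ * A) := by
  set R := Ioc c d ×ˢ Ioc a b
  have : IsFiniteMeasure (volume.restrict R) :=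
    isFiniteMeasure_restrict.2
      ((Metric.isBounded_Ioc c d).prod (Metric.isBounded_Ioc a b)).measure_lt_top.ne
  have hG : AEStronglyMeasurable (fun p : ℝ × ℝ => g p.2 p.1) (volume.restrict R) :=
    (hmeas.comp measurable_swap).aestronglyMeasurable
  have hGA : ∀ᵐ p ∂(volume.restrict R), |g p.2 p.1| ≤ A :=
    ae_restrict_of_forall_mem (measurableSet_Ioc.prod measurableSet_Ioc) fun p hp =>
      hbound _ (Ioc_subset_Icc_self hp.2) _ (Ioc_subset_Icc_self hp.1)
  have hiter {f : ℝ → ℝ} (hf : Continuous f) :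
      ∫ y in c..d, ∫ x in a..b, f (g x y) = ∫ p in R, f (g p.2 p.1) :=
    intervalIntegral_intervalIntegral_eq_setIntegral_prod hab.le hcd.le
      (integrable_comp_of_ae_abs_le hG hGA hf)
  rw [hiter (f := fun t => t) continuous_id] at hzero
  rw [hiter (f := fun t => t ^ 2) (continuous_pow 2)] at hB
  have key := integral_exp_mul_le_of_integral_eq_zero hG hA hμ.le hGA hzero
  rw [measureReal_restrict_apply_univ, volume_real_Ioc_prod_Ioc hab.le hcd.le] at key
  have harea : 0 < (b - a) * (d - c) := mul_pos (sub_pos.2 hab) (sub_pos.2 hcd)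
  rw [hiter (f := fun t => exp (μ * t)) (by fun_prop), ← hB, div_le_iff₀ harea]
  calc _ ≤ (b - a) * (d - c) + exp (μ * A) / A ^ 2 * ∫ p in R, g p.2 p.1 ^ 2 := key
    _ = _ := by field_simp [(sub_pos.2 hab).ne', (sub_pos.2 hcd).ne']
end

section
/- For every positive even integer n, C(n, n/2)² / C(2n, n) ≤ (4/3)·n^{−1/2}, and for every positive odd integer n, (C(n+1, (n+1)/2)/2)² / C(2n, n) ≤ (4/3)·n^{−1/2}. -/
/-!
The central binomial coefficient satisfies the Wallis-type bounds
`16 ^ m / (4 * m + 1) ≤ centralBinom m ^ 2 ≤ 16 ^ m / (3 * m + 1)`, both by induction from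
`(m + 1) * centralBinom (m + 1) = 2 * (2 * m + 1) * centralBinom m`.
With `n = 2m` (resp. `n = 2k + 1`), bounding the numerator from above and `centralBinom n` from
below makes the powers of 16 cancel, and the claim (squared) becomes a polynomial inequality in
`m` (resp. `k`).
-/

open Real

namespace Nat

theorem sq_mul_centralBinom_succ_sq (m : ℕ) :
    (m + 1) ^ 2 * centralBinom (m + 1) ^ 2 = 4 * (2 * m + 1) ^ 2 * centralBinom m ^ 2 := by
  rw [← mul_pow, succ_mul_centralBinom_succ]; ring

theorem three_mul_add_one_mul_centralBinom_sq_le (m : ℕ) :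
    (3 * m + 1) * centralBinom m ^ 2 ≤ 16 ^ m := by
  induction m with
  | zero => simp
  | succ m ih =>
    have hrec := sq_mul_centralBinom_succ_sq m
    have hpoly : 4 * (3 * m + 4) * (2 * m + 1) ^ 2 ≤ 16 * (3 * m + 1) * (m + 1) ^ 2 := by
      ring_nf; omega
    refine Nat.le_of_mul_le_mul_left ?_ (pow_pos (succ_pos m) 2)
    calc (m + 1) ^ 2 * ((3 * (m + 1) + 1) * centralBinom (m + 1) ^ 2)
        = (3 * m + 4) * (4 * (2 * m + 1) ^ 2 * centralBinom m ^ 2) := by rw [← hrec]; ring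
      _ ≤ 16 * (m + 1) ^ 2 * ((3 * m + 1) * centralBinom m ^ 2) := by
        nlinarith [hpoly, Nat.zero_le (centralBinom m ^ 2)]
      _ ≤ 16 * (m + 1) ^ 2 * 16 ^ m := by gcongr
      _ = (m + 1) ^ 2 * 16 ^ (m + 1) := by ring

theorem sixteen_pow_le_four_mul_add_one_mul_centralBinom_sq (m : ℕ) :
    16 ^ m ≤ (4 * m + 1) * centralBinom m ^ 2 := by
  induction m with
  | zero => simp
  | succ m ih =>
    have hrec := sq_mul_centralBinom_succ_sq m
    have hpoly : 16 * (4 * m + 1) * (m + 1) ^ 2 ≤ 4 * (4 * m + 5) * (2 * m + 1) ^ 2 := by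
      ring_nf; omega
    refine Nat.le_of_mul_le_mul_left ?_ (pow_pos (succ_pos m) 2)
    calc (m + 1) ^ 2 * 16 ^ (m + 1) = 16 * (m + 1) ^ 2 * 16 ^ m := by ring
      _ ≤ 16 * (m + 1) ^ 2 * ((4 * m + 1) * centralBinom m ^ 2) := by gcongr
      _ ≤ (4 * m + 5) * (4 * (2 * m + 1) ^ 2 * centralBinom m ^ 2) := by
        nlinarith [hpoly, Nat.zero_le (centralBinom m ^ 2)]
      _ = (m + 1) ^ 2 * ((4 * (m + 1) + 1) * centralBinom (m + 1) ^ 2) := by rw [← hrec]; ring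

theorem three_mul_add_one_sq_mul_centralBinom_pow_four_le (m : ℕ) :
    (3 * m + 1) ^ 2 * centralBinom m ^ 4 ≤ 16 ^ (2 * m) := by
  calc (3 * m + 1) ^ 2 * centralBinom m ^ 4 = ((3 * m + 1) * centralBinom m ^ 2) ^ 2 := by ring
    _ ≤ (16 ^ m) ^ 2 := by gcongr; exact three_mul_add_one_mul_centralBinom_sq_le m
    _ = 16 ^ (2 * m) := by ring

theorem eighteen_mul_mul_centralBinom_pow_four_le (m : ℕ) :
    18 * m * centralBinom m ^ 4 ≤ 16 * centralBinom (2 * m) ^ 2 := by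
  have hbound : (3 * m + 1) ^ 2 * centralBinom m ^ 4 ≤ (8 * m + 1) * centralBinom (2 * m) ^ 2 :=
    (three_mul_add_one_sq_mul_centralBinom_pow_four_le m).trans <|
      (sixteen_pow_le_four_mul_add_one_mul_centralBinom_sq (2 * m)).trans_eq (by ring)
  have hpoly : 18 * m * (8 * m + 1) ≤ 16 * (3 * m + 1) ^ 2 := by ring_nf; omega
  refine Nat.le_of_mul_le_mul_left ?_ (pow_pos (succ_pos (3 * m)) 2)
  calc (3 * m + 1) ^ 2 * (18 * m * centralBinom m ^ 4)
      = 18 * m * ((3 * m + 1) ^ 2 * centralBinom m ^ 4) := by ring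
    _ ≤ 18 * m * ((8 * m + 1) * centralBinom (2 * m) ^ 2) := by gcongr
    _ = 18 * m * (8 * m + 1) * centralBinom (2 * m) ^ 2 := by ring
    _ ≤ 16 * (3 * m + 1) ^ 2 * centralBinom (2 * m) ^ 2 := by gcongr
    _ = (3 * m + 1) ^ 2 * (16 * centralBinom (2 * m) ^ 2) := by ring

theorem nine_mul_mul_centralBinom_succ_pow_four_le (k : ℕ) :
    9 * (2 * k + 1) * centralBinom (k + 1) ^ 4 ≤ 256 * centralBinom (2 * k + 1) ^ 2 := by
  have hbound : (3 * k + 4) ^ 2 * centralBinom (k + 1) ^ 4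
      ≤ 16 * ((8 * k + 5) * centralBinom (2 * k + 1) ^ 2) :=
    calc (3 * k + 4) ^ 2 * centralBinom (k + 1) ^ 4 ≤ 16 ^ (2 * (k + 1)) :=
          three_mul_add_one_sq_mul_centralBinom_pow_four_le (k + 1)
      _ = 16 * 16 ^ (2 * k + 1) := by ring
      _ ≤ 16 * ((8 * k + 5) * centralBinom (2 * k + 1) ^ 2) := by
        gcongr
        exact (sixteen_pow_le_four_mul_add_one_mul_centralBinom_sq _).trans_eq (by ring)
  have hpoly : 9 * (2 * k + 1) * (8 * k + 5) ≤ 16 * (3 * k + 4) ^ 2 := by ring_nf; omega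
  refine Nat.le_of_mul_le_mul_left ?_ (pow_pos (succ_pos (3 * k + 3)) 2)
  calc (3 * k + 4) ^ 2 * (9 * (2 * k + 1) * centralBinom (k + 1) ^ 4)
      = 9 * (2 * k + 1) * ((3 * k + 4) ^ 2 * centralBinom (k + 1) ^ 4) := by ring
    _ ≤ 9 * (2 * k + 1) * (16 * ((8 * k + 5) * centralBinom (2 * k + 1) ^ 2)) := by gcongr
    _ = 16 * (9 * (2 * k + 1) * (8 * k + 5)) * centralBinom (2 * k + 1) ^ 2 := by ring
    _ ≤ 16 * (16 * (3 * k + 4) ^ 2) * centralBinom (2 * k + 1) ^ 2 := by gcongr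
    _ = (3 * k + 4) ^ 2 * (256 * centralBinom (2 * k + 1) ^ 2) := by ring

end Nat

theorem Real.le_mul_rpow_neg_half_of_mul_sq_le {x t c : ℝ} (ht : 0 < t) (hc : 0 ≤ c)
    (h : t * x ^ 2 ≤ c ^ 2) : x ≤ c * t ^ (-(1 / 2) : ℝ) := by
  rw [rpow_neg ht.le, ← sqrt_eq_rpow, ← div_eq_mul_inv, le_div_iff₀ (sqrt_pos.2 ht)]
  refine (abs_le_of_sq_le_sq' ?_ hc).2
  rw [mul_pow, sq_sqrt ht.le]
  linarith

theorem stmt19 :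
    (∀ n : ℕ, 0 < n → Even n →
      (n.choose (n/2) : ℝ)^2 / ((2*n).choose n : ℝ) ≤ 4/3 * (n : ℝ) ^ (-(1/2) : ℝ)) ∧
    (∀ n : ℕ, 0 < n → Odd n →
      (((n+1).choose ((n+1)/2) : ℝ) / 2)^2 / ((2*n).choose n : ℝ)
        ≤ 4/3 * (n : ℝ) ^ (-(1/2) : ℝ)) := by
  refine ⟨fun n hn ⟨m, _⟩ => ?_, fun n _ ⟨k, _⟩ => ?_⟩
  · obtain ⟨rfl, hdiv⟩ : n = 2 * m ∧ n / 2 = m := by omega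
    rw [hdiv, ← Nat.centralBinom_eq_two_mul_choose, ← Nat.centralBinom_eq_two_mul_choose]
    have hB : (0 : ℝ) < Nat.centralBinom (2 * m) := mod_cast Nat.centralBinom_pos _
    have h : (18 * m * Nat.centralBinom m ^ 4 : ℝ) ≤ 16 * Nat.centralBinom (2 * m) ^ 2 :=
      mod_cast Nat.eighteen_mul_mul_centralBinom_pow_four_le m
    refine Real.le_mul_rpow_neg_half_of_mul_sq_le (mod_cast hn) (by norm_num) ?_
    rw [div_pow, mul_div_assoc', div_le_iff₀ (by positivity)]
    push_cast
    linarith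
  · obtain ⟨rfl, hdiv⟩ : n = 2 * k + 1 ∧ (n + 1) / 2 = k + 1 := by omega
    rw [hdiv, show 2 * k + 1 + 1 = 2 * (k + 1) by ring, ← Nat.centralBinom_eq_two_mul_choose,
      ← Nat.centralBinom_eq_two_mul_choose]
    have hB : (0 : ℝ) < Nat.centralBinom (2 * k + 1) := mod_cast Nat.centralBinom_pos _
    have h : (9 * (2 * k + 1) * Nat.centralBinom (k + 1) ^ 4 : ℝ)
        ≤ 256 * Nat.centralBinom (2 * k + 1) ^ 2 :=
      mod_cast Nat.nine_mul_mul_centralBinom_succ_pow_four_le k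
    refine Real.le_mul_rpow_neg_half_of_mul_sq_le (by positivity) (by norm_num) ?_
    rw [div_pow, div_pow, mul_div_assoc', div_le_iff₀ (by positivity)]
    push_cast
    linarith
end
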